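/- arXiv:2605.05744 — 2 statements merged into one kernel-verified Lean document; each statement's English description precedes it below -/
import Mathlib

section
/- Let ν > 1 and let X be a random variable taking values in ℕ = {1,2,3,...}. Define Δ_ν = ∫_0^1 ( E[ g_ν(X,s) ] )^2 ds. Then Δ_ν = 0 if and only if X follows the DPareto(ν) distribution. -/
open MeasureTheory Real Filter Set

noncomputable def zetaR (ν : ℝ) : ℝ := ∑' k : ℕ, ((k : ℝ) + 1) ^ (-ν)

noncomputable def dpPMF (ν : ℝ) (k : ℕ) : ℝ := (k : ℝ) ^ (-ν) / zetaR ν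

noncomputable def g (ν : ℝ) (x : ℕ) (s : ℝ) : ℝ :=
  s ^ (x - 1) - 1 + ((x : ℝ) / ((x : ℝ) + 1)) ^ ν * (1 - s ^ x)

noncomputable def hker (ν : ℝ) (x y : ℕ) : ℝ :=
  ∫ s in (0:ℝ)..1, g ν x s * g ν y s

def IsDPareto {Ω : Type*} [MeasurableSpace Ω] (P : Measure Ω) (X : Ω → ℕ) (ν : ℝ) : Prop :=
  ∀ k : ℕ, 1 ≤ k → P (X ⁻¹' {k}) = ENNReal.ofReal (dpPMF ν k)

/-! ### Auxiliary definitions and lemmas -/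

noncomputable def rk (ν : ℝ) (k : ℕ) : ℝ := ((k : ℝ) / ((k : ℝ) + 1)) ^ ν

noncomputable def coef (ν : ℝ) (q : ℕ → ℝ) : ℕ → ℝ
  | 0 => q 1 + (∑' k, q k * rk ν k) - 1
  | (m+1) => q (m+2) - q (m+1) * rk ν (m+1)

lemma rk_nonneg (ν : ℝ) (k : ℕ) : 0 ≤ rk ν k :=
  Real.rpow_nonneg (div_nonneg (Nat.cast_nonneg k) (by positivity)) ν

lemma rk_le_one {ν : ℝ} (hν : 0 < ν) (k : ℕ) : rk ν k ≤ 1 := by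
  apply Real.rpow_le_one (div_nonneg (Nat.cast_nonneg k) (by positivity)) ?_ hν.le
  rw [div_le_one (by positivity)]
  linarith [Nat.cast_nonneg (α := ℝ) k]

lemma rk_mul {ν : ℝ} {m : ℕ} (hm : 1 ≤ m) :
    ((m : ℝ)) ^ (-ν) * rk ν m = ((m : ℝ) + 1) ^ (-ν) := by
  have hm' : (0:ℝ) < m := by exact_mod_cast hm
  have h1 : (0:ℝ) < (m:ℝ) + 1 := by positivity
  unfold rk
  rw [Real.div_rpow hm'.le h1.le, Real.rpow_neg hm'.le, Real.rpow_neg h1.le]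
  have h2 : ((m:ℝ)) ^ ν ≠ 0 := ne_of_gt (Real.rpow_pos_of_pos hm' ν)
  have h3 : ((m:ℝ) + 1) ^ ν ≠ 0 := ne_of_gt (Real.rpow_pos_of_pos h1 ν)
  field_simp

lemma g_abs_le {ν : ℝ} (hν : 0 < ν) (x : ℕ) {s : ℝ} (h0 : 0 ≤ s) (h1 : s ≤ 1) :
    |g ν x s| ≤ 3 := by
  have hp1 : 0 ≤ s ^ (x - 1) := pow_nonneg h0 _
  have hp2 : s ^ (x - 1) ≤ 1 := pow_le_one₀ h0 h1
  have hp3 : 0 ≤ s ^ x := pow_nonneg h0 _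
  have hp4 : s ^ x ≤ 1 := pow_le_one₀ h0 h1
  have h2 := rk_nonneg ν x
  have h3 := rk_le_one hν x
  unfold rk at h2 h3
  unfold g
  rw [abs_le]
  constructor <;> nlinarith

/-! ### zeta facts -/

lemma summable_zeta {ν : ℝ} (hν : 1 < ν) :
    Summable (fun k : ℕ => ((k : ℝ) + 1) ^ (-ν)) := by
  have h : Summable (fun n : ℕ => (n : ℝ) ^ (-ν)) :=
    Real.summable_nat_rpow.2 (by linarith)
  have h2 := (summable_nat_add_iff 1).2 h
  apply h2.congr
  intro n
  push_cast
  ring_nf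

lemma zetaR_tail {ν : ℝ} (hν : 1 < ν) :
    ∑' k : ℕ, ((k : ℝ) + 2) ^ (-ν) = zetaR ν - 1 := by
  have h := Summable.tsum_eq_zero_add (summable_zeta hν)
  rw [zetaR, h]
  push_cast
  rw [zero_add, Real.one_rpow]
  have : ∀ n : ℕ, (((n:ℝ) + 1) + 1) ^ (-ν) = ((n:ℝ) + 2) ^ (-ν) := by
    intro n; ring_nf
  rw [tsum_congr this]
  ring

lemma one_le_zetaR {ν : ℝ} (hν : 1 < ν) : 1 ≤ zetaR ν := by
  have h := Summable.le_tsum (summable_zeta hν) 0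
    (fun i _ => Real.rpow_nonneg (by positivity) _)
  simpa [zetaR, Real.one_rpow] using h

lemma zetaR_pos {ν : ℝ} (hν : 1 < ν) : 0 < zetaR ν :=
  lt_of_lt_of_le one_pos (one_le_zetaR hν)

/-! ### Vanishing of power-series coefficients -/

lemma summable_mul_pow {c : ℕ → ℝ} (hc : Summable c) {s : ℝ} (h0 : 0 ≤ s) (h1 : s ≤ 1) :
    Summable fun m => c m * s ^ m := by
  apply Summable.of_norm_bounded hc.abs
  intro m
  rw [Real.norm_eq_abs, abs_mul, abs_pow, abs_of_nonneg h0]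
  calc |c m| * s ^ m ≤ |c m| * 1 :=
        mul_le_mul_of_nonneg_left (pow_le_one₀ h0 h1) (abs_nonneg _)
    _ = |c m| := mul_one _

lemma shift_tsum {c : ℕ → ℝ} (s : ℝ) :
    ∑' m, c (m + 1) * s ^ (m + 1) = s * ∑' m, c (m + 1) * s ^ m := by
  rw [← tsum_mul_left]
  exact tsum_congr fun m => by ring

lemma head_zero {c : ℕ → ℝ} (hc : Summable c)
    (h : ∀ s ∈ Ioo (0:ℝ) 1, ∑' m, c m * s ^ m = 0) : c 0 = 0 := by
  have hc' : Summable fun m => c (m + 1) := (summable_nat_add_iff 1).2 hc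
  set C := ∑' m, |c (m + 1)| with hC
  have hCnn : 0 ≤ C := tsum_nonneg fun _ => abs_nonneg _
  have key : ∀ s ∈ Ioo (0:ℝ) 1, |c 0| ≤ s * C := by
    intro s hs
    have e1 := Summable.tsum_eq_zero_add (summable_mul_pow hc hs.1.le hs.2.le)
    rw [h s hs, shift_tsum] at e1
    have hsum2 : Summable fun m => ‖c (m + 1) * s ^ m‖ := by
      apply Summable.of_nonneg_of_le (fun m => norm_nonneg _) ?_ hc'.abs
      intro m
      rw [Real.norm_eq_abs, abs_mul, abs_pow, abs_of_nonneg hs.1.le]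
      exact (mul_le_mul_of_nonneg_left (pow_le_one₀ hs.1.le hs.2.le) (abs_nonneg _)).trans_eq
        (mul_one _)
    have habs : |∑' m, c (m + 1) * s ^ m| ≤ C := by
      calc |∑' m, c (m + 1) * s ^ m| ≤ ∑' m, ‖c (m + 1) * s ^ m‖ :=
            norm_tsum_le_tsum_norm hsum2
        _ ≤ C := by
            apply Summable.tsum_le_tsum ?_ hsum2 hc'.abs
            intro m
            rw [Real.norm_eq_abs, abs_mul, abs_pow, abs_of_nonneg hs.1.le]
            exact (mul_le_mul_of_nonneg_left (pow_le_one₀ hs.1.le hs.2.le)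
              (abs_nonneg _)).trans_eq (mul_one _)
    have hc0 : c 0 = -(s * ∑' m, c (m + 1) * s ^ m) := by
      simp only [pow_zero, mul_one] at e1
      linarith
    rw [hc0, abs_neg, abs_mul, abs_of_nonneg hs.1.le]
    exact mul_le_mul_of_nonneg_left habs hs.1.le
  by_contra hne
  have hpos : 0 < |c 0| := abs_pos.2 hne
  set s := min (|c 0| / (2 * (C + 1))) (1/2) with hsdef
  have hs0 : 0 < s := lt_min (by positivity) (by norm_num)
  have hs1 : s < 1 := lt_of_le_of_lt (min_le_right _ _) (by norm_num)
  have hk := key s ⟨hs0, hs1⟩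
  have hle : s ≤ |c 0| / (2 * (C + 1)) := min_le_left _ _
  have hsc : s * C ≤ |c 0| / (2 * (C + 1)) * C := mul_le_mul_of_nonneg_right hle hCnn
  have h2 : |c 0| / (2 * (C + 1)) * C < |c 0| := by
    rw [div_mul_eq_mul_div, div_lt_iff₀ (by positivity)]
    nlinarith
  linarith

lemma coef_vanish {c : ℕ → ℝ} (hc : Summable c)
    (h : ∀ s ∈ Ioo (0:ℝ) 1, ∑' m, c m * s ^ m = 0) : ∀ m, c m = 0 := by
  intro m
  induction m generalizing c with
  | zero => exact head_zero hc h
  | succ n ih =>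
    have hc' : Summable fun m => c (m + 1) := (summable_nat_add_iff 1).2 hc
    apply ih hc'
    intro s hs
    have e1 := Summable.tsum_eq_zero_add (summable_mul_pow hc hs.1.le hs.2.le)
    rw [h s hs, head_zero hc h, shift_tsum] at e1
    simp only [pow_zero, zero_mul, mul_one, zero_add] at e1
    have hs0 : s ≠ 0 := ne_of_gt hs.1
    have := e1.symm
    rcases mul_eq_zero.1 this with h' | h'
    · exact absurd h' hs0
    · exact h'

/-! ### The power-series expansion -/

lemma summable_of_abs_le {q f : ℕ → ℝ} (hqs : Summable q) (h : ∀ k, |f k| ≤ q k) :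
    Summable f :=
  Summable.of_norm_bounded hqs fun k => by rw [Real.norm_eq_abs]; exact h k

lemma summable_coef {ν : ℝ} (hν : 1 < ν) {q : ℕ → ℝ} (hqnn : ∀ k, 0 ≤ q k)
    (hqs : Summable q) : Summable (coef ν q) := by
  apply (summable_nat_add_iff 1).1
  have h1 : Summable fun n => q (n + 2) := (summable_nat_add_iff 2).2 hqs
  have h2 : Summable fun n => q (n + 1) * rk ν (n + 1) := by
    apply summable_of_abs_le ((summable_nat_add_iff 1).2 hqs)
    intro k
    rw [abs_mul, abs_of_nonneg (hqnn _), abs_of_nonneg (rk_nonneg _ _)]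
    calc q (k+1) * rk ν (k+1) ≤ q (k+1) * 1 :=
          mul_le_mul_of_nonneg_left (rk_le_one (show (0:ℝ) < ν by linarith) _) (hqnn _)
      _ = q (k+1) := mul_one _
  exact (h1.sub h2).congr fun n => by simp [coef]

set_option maxHeartbeats 2000000 in
lemma F_expand {ν : ℝ} (hν : 1 < ν) {q : ℕ → ℝ} (hq0 : q 0 = 0) (hqnn : ∀ k, 0 ≤ q k)
    (hqs : Summable q) (hq1 : ∑' k, q k = 1) {s : ℝ} (hs : s ∈ Ioo (0:ℝ) 1) :
    ∑' k, q k * g ν k s = ∑' m, coef ν q m * s ^ m := by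
  have hν0 : (0:ℝ) < ν := by linarith
  have h0s : (0:ℝ) ≤ s := hs.1.le
  have h1s : s ≤ 1 := hs.2.le
  have hpow : ∀ n : ℕ, s ^ n ≤ 1 := fun n => pow_le_one₀ h0s h1s
  have hpow0 : ∀ n : ℕ, 0 ≤ s ^ n := fun n => pow_nonneg h0s n
  have hA : Summable fun k => q k * s ^ (k - 1) := by
    apply summable_of_abs_le hqs; intro k
    rw [abs_mul, abs_of_nonneg (hqnn _), abs_pow, abs_of_nonneg h0s]
    calc q k * s ^ (k - 1) ≤ q k * 1 := mul_le_mul_of_nonneg_left (hpow _) (hqnn k)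
      _ = q k := mul_one _
  have hB : Summable fun k => q k * rk ν k := by
    apply summable_of_abs_le hqs; intro k
    rw [abs_mul, abs_of_nonneg (hqnn _), abs_of_nonneg (rk_nonneg _ _)]
    calc q k * rk ν k ≤ q k * 1 := mul_le_mul_of_nonneg_left (rk_le_one hν0 k) (hqnn k)
      _ = q k := mul_one _
  have hBs : Summable fun k => q k * rk ν k * s ^ k := by
    apply summable_of_abs_le hqs; intro k
    rw [abs_mul, abs_mul, abs_of_nonneg (hqnn _), abs_of_nonneg (rk_nonneg _ _),
      abs_pow, abs_of_nonneg h0s]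
    calc q k * rk ν k * s ^ k ≤ q k * rk ν k * 1 :=
          mul_le_mul_of_nonneg_left (hpow k) (mul_nonneg (hqnn k) (rk_nonneg ν k))
      _ = q k * rk ν k := mul_one _
      _ ≤ q k * 1 := mul_le_mul_of_nonneg_left (rk_le_one hν0 k) (hqnn k)
      _ = q k := mul_one _
  have step1 : ∑' k, q k * g ν k s
      = (∑' k, q k * s ^ (k - 1)) + ((∑' k, q k * rk ν k) - ∑' k, q k)
        - ∑' k, q k * rk ν k * s ^ k := by
    rw [← Summable.tsum_sub hB hqs, ← Summable.tsum_add hA (hB.sub hqs), ← Summable.tsum_sub (hA.add (hB.sub hqs)) hBs]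
    apply tsum_congr
    intro k
    unfold g rk
    ring
  have hq' : Summable fun n => q (n + 1) := (summable_nat_add_iff 1).2 hqs
  have hA' : Summable fun n => q (n + 1) * s ^ n := by
    apply summable_of_abs_le hq'; intro k
    rw [abs_mul, abs_of_nonneg (hqnn _), abs_pow, abs_of_nonneg h0s]
    calc q (k+1) * s ^ k ≤ q (k+1) * 1 := mul_le_mul_of_nonneg_left (hpow k) (hqnn _)
      _ = q (k+1) := mul_one _
  have hA2 : Summable fun n => q (n + 2) * s ^ (n + 1) := (summable_nat_add_iff 1).2 hA'
  have hBs' : Summable fun n => q (n + 1) * rk ν (n + 1) * s ^ (n + 1) :=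
    (summable_nat_add_iff 1).2 hBs
  have eA : ∑' k, q k * s ^ (k - 1) = q 1 + ∑' n, q (n + 2) * s ^ (n + 1) := by
    rw [Summable.tsum_eq_zero_add hA]
    simp only [hq0, zero_mul, zero_add, Nat.add_sub_cancel]
    rw [Summable.tsum_eq_zero_add hA']
    simp only [pow_zero, mul_one]
  have eBs : ∑' k, q k * rk ν k * s ^ k
      = ∑' n, q (n + 1) * rk ν (n + 1) * s ^ (n + 1) := by
    rw [Summable.tsum_eq_zero_add hBs]
    simp only [hq0, zero_mul, zero_add]
  have eC : ∑' n, coef ν q (n + 1) * s ^ (n + 1)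
      = (∑' n, q (n + 2) * s ^ (n + 1)) - ∑' n, q (n + 1) * rk ν (n + 1) * s ^ (n + 1) := by
    rw [← Summable.tsum_sub hA2 hBs']
    exact tsum_congr fun n => by simp only [coef]; ring
  rw [step1, eA, eBs, hq1,
    Summable.tsum_eq_zero_add (summable_mul_pow (summable_coef hν hqnn hqs) h0s h1s), eC]
  simp only [coef, pow_zero, mul_one]
  ring

/-! ### Measure-theoretic reduction -/

lemma integral_g_eq {Ω : Type*} [MeasurableSpace Ω] (P : Measure Ω) [IsProbabilityMeasure P]
    (X : Ω → ℕ) (hXm : Measurable X) {ν : ℝ} (hν : 1 < ν) {s : ℝ}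
    (h0 : 0 ≤ s) (h1 : s ≤ 1) :
    ∫ ω, g ν (X ω) s ∂P = ∑' k, (P (X ⁻¹' {k})).toReal * g ν k s := by
  have hmap : IsProbabilityMeasure (P.map X) := Measure.isProbabilityMeasure_map hXm.aemeasurable
  have hint : Integrable (fun n : ℕ => g ν n s) (P.map X) := by
    apply Integrable.mono' (integrable_const (3:ℝ))
    · exact measurable_from_nat.aestronglyMeasurable
    · filter_upwards with n
      rw [Real.norm_eq_abs]
      exact g_abs_le (by linarith) _ h0 h1
  rw [← integral_map hXm.aemeasurable hint.1, integral_countable' hint]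
  apply tsum_congr
  intro k
  rw [measureReal_def, Measure.map_apply hXm (measurableSet_singleton k)]
  simp [smul_eq_mul]

theorem departure_measure_zero_iff
    {Ω : Type*} [MeasurableSpace Ω] (P : Measure Ω) [IsProbabilityMeasure P]
    (X : Ω → ℕ) (hXm : Measurable X) (hX1 : ∀ ω, 1 ≤ X ω)
    (ν : ℝ) (hν : 1 < ν) :
    (∫ s in (0:ℝ)..1, (∫ ω, g ν (X ω) s ∂P) ^ 2) = 0 ↔ IsDPareto P X ν := by
  have hν0 : (0:ℝ) < ν := by linarith
  set q : ℕ → ℝ := fun k => (P (X ⁻¹' {k})).toReal with hqdef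
  have hq0 : q 0 = 0 := by
    have hempty : X ⁻¹' {0} = (∅ : Set Ω) := by
      ext ω
      simp only [mem_preimage, mem_singleton_iff, mem_empty_iff_false, iff_false]
      have := hX1 ω; omega
    simp [hqdef, hempty]
  have hqnn : ∀ k, 0 ≤ q k := fun k => ENNReal.toReal_nonneg
  have hPsum : ∑' k, P (X ⁻¹' {k}) = 1 := by
    have hU : ⋃ k : ℕ, X ⁻¹' {k} = univ := by ext ω; simp
    have hd : Pairwise (Function.onFun Disjoint fun k : ℕ => X ⁻¹' {k}) := by
      intro i j hij
      exact Disjoint.preimage X (by simp [hij])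
    rw [← measure_univ (μ := P), ← hU,
      measure_iUnion hd fun k => hXm (measurableSet_singleton k)]
  have hqs : Summable q :=
    ENNReal.summable_toReal (by rw [hPsum]; exact ENNReal.one_ne_top)
  have hq1 : ∑' k, q k = 1 := by
    rw [hqdef]
    rw [← ENNReal.tsum_toReal_eq fun k => measure_ne_top P _, hPsum, ENNReal.toReal_one]
  have hFeq : ∀ s ∈ Ioo (0:ℝ) 1,
      (∫ ω, g ν (X ω) s ∂P) = ∑' m, coef ν q m * s ^ m := by
    intro s hs
    rw [integral_g_eq P X hXm hν hs.1.le hs.2.le]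
    exact F_expand hν hq0 hqnn hqs hq1 hs
  have hc : Summable (coef ν q) := summable_coef hν hqnn hqs
  have hB : Summable fun k => q k * rk ν k := by
    apply summable_of_abs_le hqs
    intro k
    rw [abs_mul, abs_of_nonneg (hqnn _), abs_of_nonneg (rk_nonneg _ _)]
    calc q k * rk ν k ≤ q k * 1 := mul_le_mul_of_nonneg_left (rk_le_one hν0 k) (hqnn k)
      _ = q k := mul_one _
  have hone : ∀ᵐ x : ℝ, x ≠ (1:ℝ) := by
    have hs1 : (volume : Measure ℝ) {(1:ℝ)} = 0 := Real.volume_singleton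
    filter_upwards [compl_mem_ae_iff.2 hs1] with x hx
    simpa using hx
  constructor
  · -- forward direction
    intro H
    set t : ℝ → ℝ := fun x => max 0 (min x 1) with htdef
    have ht_cont : Continuous t := continuous_const.max (continuous_id.min continuous_const)
    have ht_mem : ∀ x, t x ∈ Icc (0:ℝ) 1 := fun x =>
      ⟨le_max_left _ _, max_le (by norm_num) (min_le_right _ _)⟩
    have ht_eq : ∀ x ∈ Icc (0:ℝ) 1, t x = x := by
      intro x hx
      simp only [htdef]
      rw [min_eq_left hx.2, max_eq_right hx.1]
    set G : ℝ → ℝ := fun x => ∑' m, coef ν q m * (t x) ^ m with hGdef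
    have hG_cont : Continuous G := by
      apply continuous_tsum ?_ hc.abs ?_
      · intro m
        exact continuous_const.mul (ht_cont.pow m)
      · intro m x
        rw [Real.norm_eq_abs, abs_mul, abs_pow, abs_of_nonneg (ht_mem x).1]
        exact (mul_le_mul_of_nonneg_left (pow_le_one₀ (ht_mem x).1 (ht_mem x).2)
          (abs_nonneg _)).trans_eq (mul_one _)
    have hFG : ∀ x ∈ Ioo (0:ℝ) 1, (∫ ω, g ν (X ω) x ∂P) = G x := by
      intro x hx
      rw [hFeq x hx, hGdef]
      simp only
      rw [ht_eq x ⟨hx.1.le, hx.2.le⟩]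
    have hcongr : (∫ s in (0:ℝ)..1, (∫ ω, g ν (X ω) s ∂P) ^ 2)
        = ∫ s in (0:ℝ)..1, (G s) ^ 2 := by
      apply intervalIntegral.integral_congr_ae
      filter_upwards [hone] with x hx hxI
      rw [uIoc_of_le (by norm_num : (0:ℝ) ≤ 1)] at hxI
      rw [hFG x ⟨hxI.1, lt_of_le_of_ne hxI.2 hx⟩]
    rw [hcongr] at H
    have hGint : IntervalIntegrable (fun s => (G s) ^ 2) volume 0 1 :=
      (hG_cont.pow 2).intervalIntegrable 0 1
    have hae := (intervalIntegral.integral_eq_zero_iff_of_le_of_nonneg_ae (by norm_num)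
      (Filter.Eventually.of_forall fun x => sq_nonneg _) hGint).1 H
    have hGzero : ∀ x ∈ Ioo (0:ℝ) 1, G x = 0 := by
      intro x hx
      by_contra hne
      set U := {y : ℝ | G y ≠ 0} ∩ Ioo 0 1 with hU
      have hUopen : IsOpen U :=
        (isOpen_compl_singleton.preimage hG_cont).inter isOpen_Ioo
      have hpos : 0 < volume U := hUopen.measure_pos volume ⟨x, ⟨hne, hx⟩⟩
      have hnull : volume ({y : ℝ | ¬ (G y) ^ 2 = 0} ∩ Ioc 0 1) = 0 := by
        have h' := hae
        rw [EventuallyEq, ae_iff] at h'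
        rwa [Measure.restrict_apply' measurableSet_Ioc] at h'
      have hsub : U ⊆ {y : ℝ | ¬ (G y) ^ 2 = 0} ∩ Ioc 0 1 := by
        rintro y ⟨h1, h2⟩
        exact ⟨pow_ne_zero _ h1, Ioo_subset_Ioc_self h2⟩
      have hle : volume U ≤ volume ({y : ℝ | ¬ (G y) ^ 2 = 0} ∩ Ioc 0 1) := measure_mono hsub
      rw [hnull] at hle
      exact absurd (le_antisymm hle zero_le) (ne_of_gt hpos)
    have hcoef0 : ∀ m, coef ν q m = 0 := by
      apply coef_vanish hc
      intro s hs
      have hg0 := hGzero s hs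
      rw [hGdef] at hg0
      simp only at hg0
      rwa [ht_eq s ⟨hs.1.le, hs.2.le⟩] at hg0
    have hrec : ∀ m : ℕ, q (m + 2) = q (m + 1) * rk ν (m + 1) := by
      intro m
      have h' := hcoef0 (m + 1)
      simp only [coef] at h'
      linarith
    have hform : ∀ m : ℕ, q (m + 1) = q 1 * ((m : ℝ) + 1) ^ (-ν) := by
      intro m
      induction m with
      | zero =>
        norm_num [Real.one_rpow]
      | succ n ihn =>
        rw [hrec n, ihn, mul_assoc]
        congr 1
        have h' := rk_mul (ν := ν) (m := n + 1) (by omega)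
        push_cast at h' ⊢
        convert h' using 2 <;> ring
    have hR : ∑' k, q k * rk ν k = q 1 * (zetaR ν - 1) := by
      rw [Summable.tsum_eq_zero_add hB]
      simp only [hq0, zero_mul, zero_add]
      have hterm : ∀ n : ℕ, q (n + 1) * rk ν (n + 1) = q 1 * ((n : ℝ) + 2) ^ (-ν) := by
        intro n
        rw [hform n, mul_assoc]
        congr 1
        have h' := rk_mul (ν := ν) (m := n + 1) (by omega)
        push_cast at h' ⊢
        convert h' using 2 <;> ring
      rw [tsum_congr hterm, tsum_mul_left, zetaR_tail hν]
    have hq1val : q 1 = 1 / zetaR ν := by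
      have h0 := hcoef0 0
      simp only [coef] at h0
      rw [hR] at h0
      have hz := zetaR_pos hν
      field_simp
      nlinarith
    intro k hk
    obtain ⟨m, rfl⟩ : ∃ m, k = m + 1 := ⟨k - 1, by omega⟩
    have hval : q (m + 1) = dpPMF ν (m + 1) := by
      rw [hform m, hq1val, dpPMF]
      push_cast
      ring
    have : P (X ⁻¹' {m + 1}) = ENNReal.ofReal (q (m + 1)) :=
      (ENNReal.ofReal_toReal (measure_ne_top P _)).symm
    rw [this, hval]
  · -- backward direction
    intro hDP
    have hq_eq : ∀ m : ℕ, q (m + 1) = ((m : ℝ) + 1) ^ (-ν) / zetaR ν := by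
      intro m
      have hnn : 0 ≤ dpPMF ν (m + 1) :=
        div_nonneg (Real.rpow_nonneg (by positivity) _) (zetaR_pos hν).le
      simp only [hqdef]
      rw [hDP (m + 1) (by omega), ENNReal.toReal_ofReal hnn, dpPMF]
      push_cast
      ring
    have hrk_id : ∀ n : ℕ, ((n : ℝ) + 1) ^ (-ν) * rk ν (n + 1) = ((n : ℝ) + 2) ^ (-ν) := by
      intro n
      have h' := rk_mul (ν := ν) (m := n + 1) (by omega)
      push_cast at h'
      convert h' using 2 <;> ring
    have hcoef0 : ∀ m, coef ν q m = 0 := by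
      intro m
      have hz := (zetaR_pos hν).ne'
      cases m with
      | zero =>
        simp only [coef]
        have hR : ∑' k, q k * rk ν k = (zetaR ν - 1) / zetaR ν := by
          rw [Summable.tsum_eq_zero_add hB]
          simp only [hq0, zero_mul, zero_add]
          have hterm : ∀ n : ℕ,
              q (n + 1) * rk ν (n + 1) = ((n : ℝ) + 2) ^ (-ν) * (1 / zetaR ν) := by
            intro n
            rw [hq_eq n, div_mul_eq_mul_div, hrk_id n]
            ring
          rw [tsum_congr hterm, tsum_mul_right, zetaR_tail hν]
          ring
        rw [hq_eq 0, hR]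
        norm_num [Real.one_rpow]
        field_simp
        ring
      | succ n =>
        simp only [coef]
        rw [hq_eq (n + 1), hq_eq n, div_mul_eq_mul_div, hrk_id n]
        push_cast
        ring_nf
    have hFzero : ∀ s ∈ Ioo (0:ℝ) 1, (∫ ω, g ν (X ω) s ∂P) = 0 := by
      intro s hs
      rw [hFeq s hs]
      simp [hcoef0]
    have hzero : (∫ s in (0:ℝ)..1, (∫ ω, g ν (X ω) s ∂P) ^ 2)
        = ∫ s in (0:ℝ)..1, (0:ℝ) := by
      apply intervalIntegral.integral_congr_ae
      filter_upwards [hone] with x hx hxI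
      rw [uIoc_of_le (by norm_num : (0:ℝ) ≤ 1)] at hxI
      rw [hFzero x ⟨hxI.1, lt_of_le_of_ne hxI.2 hx⟩]
      norm_num
    rw [hzero, intervalIntegral.integral_zero]
end

section
/- Let ν₀ > 1 and let X be a random variable distributed according to DPareto(ν₀). Then for every x ∈ ℕ = {1,2,3,...}, E[ h_{ν₀}(x, X) ] = ∫_0^1 g_{ν₀}(x,s) · E[ g_{ν₀}(X,s) ] ds = 0; that is, the kernel h_{ν₀} is degenerate of order 1 under DPareto(ν₀). -/
open MeasureTheory Real Filter Set

/-- A uniform bound on `g`. -/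
lemma g_abs_le_s14 (ν : ℝ) (hν : 0 ≤ ν) (k : ℕ) {s : ℝ} (hs : s ∈ Icc (0:ℝ) 1) :
    |g ν k s| ≤ 2 := by
  obtain ⟨hs0, hs1⟩ := hs
  have ha0 : (0:ℝ) ≤ s ^ (k - 1) := pow_nonneg hs0 _
  have ha1 : s ^ (k - 1) ≤ 1 := pow_le_one₀ hs0 hs1
  have hc0 : (0:ℝ) ≤ s ^ k := pow_nonneg hs0 _
  have hc1 : s ^ k ≤ 1 := pow_le_one₀ hs0 hs1
  have hb0 : (0:ℝ) ≤ ((k:ℝ) / ((k:ℝ) + 1)) ^ ν :=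
    Real.rpow_nonneg (by positivity) _
  have hb1 : ((k:ℝ) / ((k:ℝ) + 1)) ^ ν ≤ 1 :=
    Real.rpow_le_one (by positivity) (by
      rw [div_le_one (by positivity)]; linarith) hν
  rw [abs_le]
  unfold g
  constructor <;> nlinarith [mul_nonneg hb0 (by linarith : (0:ℝ) ≤ 1 - s ^ k),
    mul_le_one₀ hb1 (by linarith : (0:ℝ) ≤ 1 - s ^ k) (by linarith : 1 - s ^ k ≤ 1)]

lemma summable_shift (ν : ℝ) (hν : 1 < ν) : Summable (fun k : ℕ => ((k:ℝ) + 1) ^ (-ν)) := by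
  have h : Summable (fun k : ℕ => ((k:ℝ)) ^ (-ν)) :=
    Real.summable_nat_rpow.mpr (by linarith)
  have := (summable_nat_add_iff 1).mpr h
  refine this.congr fun k => ?_
  push_cast
  ring_nf

/-- The key series identity: the weighted sum of `g` vanishes. -/
lemma core_sum (ν : ℝ) (hν : 1 < ν) {s : ℝ} (hs : s ∈ Icc (0:ℝ) 1) :
    ∑' k : ℕ, (k:ℝ) ^ (-ν) * g ν k s = 0 := by
  obtain ⟨hs0, hs1⟩ := hs
  set A : ℕ → ℝ := fun k => ((k:ℝ) + 1) ^ (-ν) * (s ^ k - 1) with hA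
  have hbase : Summable (fun k : ℕ => ((k:ℝ) + 1) ^ (-ν)) := summable_shift ν hν
  have habs : ∀ k, |A k| ≤ ((k:ℝ) + 1) ^ (-ν) := by
    intro k
    have h1 : |s ^ k - 1| ≤ 1 := by
      rw [abs_le]
      constructor <;> nlinarith [pow_nonneg hs0 k, pow_le_one₀ hs0 hs1 (n := k)]
    have h2 : (0:ℝ) ≤ ((k:ℝ) + 1) ^ (-ν) := Real.rpow_nonneg (by positivity) _
    calc |A k| = ((k:ℝ) + 1) ^ (-ν) * |s ^ k - 1| := by
            rw [hA, abs_mul, abs_of_nonneg h2]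
      _ ≤ ((k:ℝ) + 1) ^ (-ν) * 1 := by nlinarith
      _ = ((k:ℝ) + 1) ^ (-ν) := mul_one _
  have hsumA : Summable A :=
    Summable.of_abs (Summable.of_nonneg_of_le (fun k => abs_nonneg _) habs hbase)
  have hshift : Summable (fun k => A (k + 1)) := (summable_nat_add_iff 1).mpr hsumA
  have hterm : ∀ k : ℕ, (((k:ℕ)+1:ℕ):ℝ) ^ (-ν) * g ν (k + 1) s = A k - A (k + 1) := by
    intro k
    have hk1 : (0:ℝ) < (k:ℝ) + 1 := by positivity
    have hk2 : (0:ℝ) < (k:ℝ) + 2 := by positivity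
    have key : ((k:ℝ) + 1) ^ (-ν) * (((k:ℝ) + 1) / ((k:ℝ) + 2)) ^ ν = ((k:ℝ) + 2) ^ (-ν) := by
      rw [Real.div_rpow (le_of_lt hk1) (le_of_lt hk2), Real.rpow_neg (le_of_lt hk1),
        Real.rpow_neg (le_of_lt hk2)]
      have h1 : ((k:ℝ) + 1) ^ ν ≠ 0 := (Real.rpow_pos_of_pos hk1 ν).ne'
      have h2 : ((k:ℝ) + 2) ^ ν ≠ 0 := (Real.rpow_pos_of_pos hk2 ν).ne'
      field_simp
    have hg : g ν (k + 1) s =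
        (s ^ k - 1) + (((k:ℝ) + 1) / ((k:ℝ) + 2)) ^ ν * (1 - s ^ (k + 1)) := by
      unfold g
      have : (k + 1 : ℕ) - 1 = k := rfl
      rw [this]
      push_cast
      ring_nf
    rw [hg, hA]
    push_cast
    have : ((k:ℝ) + 1) ^ (-ν) * ((s ^ k - 1) + (((k:ℝ) + 1) / ((k:ℝ) + 2)) ^ ν * (1 - s ^ (k + 1)))
        = ((k:ℝ) + 1) ^ (-ν) * (s ^ k - 1)
          + (((k:ℝ) + 1) ^ (-ν) * (((k:ℝ) + 1) / ((k:ℝ) + 2)) ^ ν) * (1 - s ^ (k + 1)) := by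
      ring
    rw [this, key]
    ring
  have hsucc : Summable (fun k : ℕ => (((k:ℕ)+1:ℕ):ℝ) ^ (-ν) * g ν (k + 1) s) := by
    exact (funext hterm : _ = _) ▸ (hsumA.sub hshift)
  have hfull : Summable (fun k : ℕ => (k:ℝ) ^ (-ν) * g ν k s) :=
    (summable_nat_add_iff 1).mp hsucc
  rw [Summable.tsum_eq_zero_add hfull]
  have f0 : ((0:ℕ):ℝ) ^ (-ν) * g ν 0 s = 0 := by
    rw [Nat.cast_zero, Real.zero_rpow (by linarith : -ν ≠ 0), zero_mul]
  rw [f0, zero_add]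
  have hshift_eq : ∑' k, A (k + 1) = ∑' k, A k - A 0 := by
    have h := Summable.tsum_eq_zero_add hsumA
    linarith
  have hA0 : A 0 = 0 := by simp [hA]
  calc ∑' k : ℕ, (((k:ℕ)+1:ℕ):ℝ) ^ (-ν) * g ν (k + 1) s
      = ∑' k : ℕ, (A k - A (k + 1)) := tsum_congr hterm
    _ = (∑' k, A k) - ∑' k, A (k + 1) := Summable.tsum_sub hsumA hshift
    _ = A 0 := by rw [hshift_eq]; ring
    _ = 0 := hA0

lemma zetaR_nonneg (ν : ℝ) : 0 ≤ zetaR ν :=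
  tsum_nonneg fun k => Real.rpow_nonneg (by positivity) _

lemma dpPMF_nonneg (ν : ℝ) (k : ℕ) : 0 ≤ dpPMF ν k :=
  div_nonneg (Real.rpow_nonneg (by positivity) _) (zetaR_nonneg ν)

/-- The expectation of `g ν (X ·) s` vanishes. -/
lemma exp_g {Ω : Type*} [MeasurableSpace Ω] (P : Measure Ω) [IsProbabilityMeasure P]
    (X : Ω → ℕ) (hXm : Measurable X) (hX1 : ∀ ω, 1 ≤ X ω)
    (ν : ℝ) (hν : 1 < ν) (hdist : IsDPareto P X ν) {s : ℝ} (hs : s ∈ Icc (0:ℝ) 1) :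
    ∫ ω, g ν (X ω) s ∂P = 0 := by
  have hν0 : (0:ℝ) ≤ ν := by linarith
  have hmeasf : Measurable (fun k : ℕ => g ν k s) := measurable_from_top
  set μ := P.map X with hμ
  haveI : IsProbabilityMeasure μ := Measure.isProbabilityMeasure_map hXm.aemeasurable
  have hint : Integrable (fun k : ℕ => g ν k s) μ := by
    refine Integrable.mono' (integrable_const 2) hmeasf.aestronglyMeasurable ?_
    filter_upwards with k
    simpa [Real.norm_eq_abs] using g_abs_le_s14 ν hν0 k hs
  have hmap : ∫ ω, g ν (X ω) s ∂P = ∫ k, g ν k s ∂μ :=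
    (integral_map hXm.aemeasurable hmeasf.aestronglyMeasurable).symm
  rw [hmap, MeasureTheory.integral_countable' hint]
  have hμk : ∀ k : ℕ, (μ {k}).toReal = dpPMF ν k := by
    intro k
    have hm : μ {k} = P (X ⁻¹' {k}) := Measure.map_apply hXm (measurableSet_singleton k)
    rcases Nat.eq_zero_or_pos k with rfl | hk
    · have hempty : X ⁻¹' {(0:ℕ)} = ∅ := by
        ext ω
        simp only [mem_preimage, mem_singleton_iff, mem_empty_iff_false, iff_false]
        exact fun h => absurd h (Nat.one_le_iff_ne_zero.mp (hX1 ω))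
      rw [hm, hempty, measure_empty]
      simp [dpPMF, Real.zero_rpow (by linarith : -ν ≠ 0)]
    · rw [hm, hdist k hk, ENNReal.toReal_ofReal (dpPMF_nonneg ν k)]
  calc ∑' k : ℕ, (μ {k}).toReal • g ν k s
      = ∑' k : ℕ, ((k:ℝ) ^ (-ν) * g ν k s) / zetaR ν := by
        refine tsum_congr fun k => ?_
        rw [hμk k, smul_eq_mul]
        unfold dpPMF
        ring
    _ = (∑' k : ℕ, (k:ℝ) ^ (-ν) * g ν k s) / zetaR ν := tsum_div_const
    _ = 0 := by rw [core_sum ν hν hs, zero_div]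

theorem hker_degenerate
    {Ω : Type*} [MeasurableSpace Ω] (P : Measure Ω) [IsProbabilityMeasure P]
    (X : Ω → ℕ) (hXm : Measurable X) (hX1 : ∀ ω, 1 ≤ X ω)
    (ν₀ : ℝ) (hν₀ : 1 < ν₀) (hdist : IsDPareto P X ν₀) :
    ∀ x : ℕ, 1 ≤ x →
      (∫ ω, hker ν₀ x (X ω) ∂P) =
        (∫ s in (0:ℝ)..1, g ν₀ x s * (∫ ω, g ν₀ (X ω) s ∂P)) ∧
      (∫ ω, hker ν₀ x (X ω) ∂P) = 0 := by
  intro x hx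
  have hν0 : (0:ℝ) ≤ ν₀ := by linarith
  set μs := (volume : Measure ℝ).restrict (Ioc (0:ℝ) 1) with hμs
  haveI : IsFiniteMeasure μs := by
    constructor
    rw [hμs, Measure.restrict_apply_univ]
    simp
  -- measurability of the integrand on the product
  have hFm : Measurable (fun p : Ω × ℝ => g ν₀ x p.2 * g ν₀ (X p.1) p.2) := by
    have hcont : Continuous (g ν₀ x) := by
      unfold g
      continuity
    have h2 : Measurable (fun p : Ω × ℝ => g ν₀ (X p.1) p.2) := by
      unfold g
      apply Measurable.add
      · exact (measurable_snd.pow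
          ((measurable_from_top (f := fun n : ℕ => n - 1)).comp
            (hXm.comp measurable_fst))).sub measurable_const
      · exact ((measurable_from_top (f := fun n : ℕ => ((n:ℝ) / ((n:ℝ) + 1)) ^ ν₀)).comp
          (hXm.comp measurable_fst)).mul
          (measurable_const.sub (measurable_snd.pow (hXm.comp measurable_fst)))
    exact (hcont.measurable.comp measurable_snd).mul h2
  -- a.e. on the product, the second coordinate is in (0,1]
  have hae : ∀ᵐ p ∂(P.prod μs), p.2 ∈ Ioc (0:ℝ) 1 := by
    rw [ae_iff]
    have hset : {p : Ω × ℝ | ¬ p.2 ∈ Ioc (0:ℝ) 1} = (univ : Set Ω) ×ˢ ((Ioc (0:ℝ) 1)ᶜ) := by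
      ext p; simp
    rw [hset, Measure.prod_prod]
    have : μs ((Ioc (0:ℝ) 1)ᶜ) = 0 := by
      rw [hμs, Measure.restrict_apply measurableSet_Ioc.compl, compl_inter_self]
      simp
    rw [this, mul_zero]
  -- integrability on the product
  have hFint : Integrable (Function.uncurry fun ω s => g ν₀ x s * g ν₀ (X ω) s) (P.prod μs) := by
    refine Integrable.mono' (integrable_const 4) hFm.aestronglyMeasurable ?_
    filter_upwards [hae] with p hp
    have hmem : p.2 ∈ Icc (0:ℝ) 1 := ⟨le_of_lt hp.1, hp.2⟩
    have h1 := g_abs_le_s14 ν₀ hν0 x hmem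
    have h2 := g_abs_le_s14 ν₀ hν0 (X p.1) hmem
    rw [Function.uncurry, Real.norm_eq_abs, abs_mul]
    nlinarith [abs_nonneg (g ν₀ x p.2), abs_nonneg (g ν₀ (X p.1) p.2)]
  have hswap := MeasureTheory.integral_integral_swap hFint
  -- identify the LHS
  have hker_eq : ∀ ω, hker ν₀ x (X ω) = ∫ s, g ν₀ x s * g ν₀ (X ω) s ∂μs := fun ω =>
    intervalIntegral.integral_of_le zero_le_one
  have hLHS : (∫ ω, hker ν₀ x (X ω) ∂P)
      = ∫ s, g ν₀ x s * (∫ ω, g ν₀ (X ω) s ∂P) ∂μs := by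
    calc (∫ ω, hker ν₀ x (X ω) ∂P)
        = ∫ ω, ∫ s, g ν₀ x s * g ν₀ (X ω) s ∂μs ∂P := by
          exact integral_congr_ae (Filter.Eventually.of_forall hker_eq)
      _ = ∫ s, ∫ ω, g ν₀ x s * g ν₀ (X ω) s ∂P ∂μs := hswap
      _ = ∫ s, g ν₀ x s * (∫ ω, g ν₀ (X ω) s ∂P) ∂μs := by
          refine integral_congr_ae (Filter.Eventually.of_forall fun s => ?_)
          exact MeasureTheory.integral_const_mul _ _
  have hRHS : (∫ s in (0:ℝ)..1, g ν₀ x s * (∫ ω, g ν₀ (X ω) s ∂P))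
      = ∫ s, g ν₀ x s * (∫ ω, g ν₀ (X ω) s ∂P) ∂μs :=
    intervalIntegral.integral_of_le zero_le_one
  have hzero : (∫ s, g ν₀ x s * (∫ ω, g ν₀ (X ω) s ∂P) ∂μs) = 0 := by
    rw [hμs]
    have : ∫ s in Ioc (0:ℝ) 1, g ν₀ x s * (∫ ω, g ν₀ (X ω) s ∂P)
        = ∫ s in Ioc (0:ℝ) 1, (0:ℝ) := by
      refine setIntegral_congr_fun measurableSet_Ioc fun s hsmem => ?_
      have hmem : s ∈ Icc (0:ℝ) 1 := ⟨le_of_lt hsmem.1, hsmem.2⟩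
      rw [exp_g P X hXm hX1 ν₀ hν₀ hdist hmem, mul_zero]
    rw [this, integral_zero]
  exact ⟨hLHS.trans hRHS.symm, hLHS.trans hzero⟩
end
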